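/- With the GMT* algorithm as specified in the context, suppose r > 0, ε > 0, σ : [0,1] → X_free is a feasible path with σ(0) = x_init and σ(1) ∈ X_goal and arc length c(σ), and the sample set V contains waypoints y_0, y_1, …, y_M with y_0 = x_init, y_M ∈ X_goal, which (ε, r)-trace σ, and which additionally satisfy that the closed Euclidean ball B(y_m, r) is contained in X_free for all m ∈ {0,…,M}. Then GMT* run with connection radius r and group cost threshold factor λ terminates successfully and returns a path of cost c_GMT ≤ (1 + 2λ)(1 + ε) c(σ). -/
import Mathlib


open Metric Set

noncomputable section

/-- The state space for `d`-dimensional planning: Euclidean space `ℝ^d`. -/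
abbrev EucSp (d : ℕ) := EuclideanSpace ℝ (Fin d)

/-- The unit cube `[0,1]^d`, the state space `X` of the planning problem. -/
def unitCube (d : ℕ) : Set (EucSp d) := {x | ∀ i, x i ∈ Set.Icc (0 : ℝ) 1}

/-- The data of a GMT* planning problem: an obstacle set `Xobs ⊆ X = [0,1]^d`,
an initial state `xinit`, a goal region `Xgoal`, a sample set `V`, a connection
radius `r`, and a group cost threshold factor `lam` (λ). -/
structure GMTProblem (d : ℕ) where
  Xobs : Set (EucSp d)
  xinit : EucSp d
  Xgoal : Set (EucSp d)
  V : Set (EucSp d)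
  r : ℝ
  lam : ℝ

namespace GMTProblem

variable {d : ℕ}

/-- The free space `X_free = X \ X_obs`. -/
def Xfree (P : GMTProblem d) : Set (EucSp d) := unitCube d \ P.Xobs

/-- The group cost threshold increment `δ = λ r`. -/
def delta (P : GMTProblem d) : ℝ := P.lam * P.r

/-- Standing assumptions of the problem setup: `r > 0`, `λ ∈ (0,1]`, the sample
set `V` is finite, contained in the free space, contains `xinit` and at least one
goal sample, `xinit` is free, and the goal region is free. -/
def Valid (P : GMTProblem d) : Prop :=
  0 < P.r ∧ P.lam ∈ Set.Ioc (0 : ℝ) 1 ∧ P.V.Finite ∧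
    P.xinit ∈ P.Xfree ∧ P.V ⊆ P.Xfree ∧ P.xinit ∈ P.V ∧
    P.Xgoal ⊆ P.Xfree ∧ (P.V ∩ P.Xgoal).Nonempty

end GMTProblem

/-- An execution of the GMT* algorithm on the problem `P`.  The fields record, for
each iteration `i`, the sets `V_open`, `V_unexplored`, `V_closed` at the start of
iteration `i`, the cost-to-arrive `cost x` assigned to each tree node `x`, the
locally optimal parent `sel i x` selected for each candidate `x` at iteration `i`,
the tree parent map, the expansion group `group i` (open nodes of cost `≤ i δ`),
the candidate set `cand i` (unexplored samples within distance `r` of the group),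
and the set `added i` of candidates whose selected connection is collision-free,
which are added to the tree.  The propositional fields are exactly the
initialization and per-iteration transition rules of GMT*. -/
structure GMTRun {d : ℕ} (P : GMTProblem d) where
  Vopen : ℕ → Set (EucSp d)
  Vunexp : ℕ → Set (EucSp d)
  Vclosed : ℕ → Set (EucSp d)
  cost : EucSp d → ℝ
  sel : ℕ → EucSp d → EucSp d
  parent : EucSp d → EucSp d
  group : ℕ → Set (EucSp d)
  cand : ℕ → Set (EucSp d)
  added : ℕ → Set (EucSp d)
  init_open : Vopen 0 = {P.xinit}
  init_unexp : Vunexp 0 = P.V \ {P.xinit}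
  init_closed : Vclosed 0 = ∅
  cost_init : cost P.xinit = 0
  group_def : ∀ i, group i = {x ∈ Vopen i | cost x ≤ (i : ℝ) * P.delta}
  cand_def : ∀ i, cand i = {x ∈ Vunexp i | ∃ z ∈ group i, dist x z ≤ P.r}
  sel_mem : ∀ i, ∀ x ∈ cand i, sel i x ∈ Vopen i ∧ dist x (sel i x) ≤ P.r
  sel_min : ∀ i, ∀ x ∈ cand i, ∀ y ∈ Vopen i, dist x y ≤ P.r →
    cost (sel i x) + dist x (sel i x) ≤ cost y + dist x y
  added_def : ∀ i, added i = {x ∈ cand i | segment ℝ (sel i x) x ⊆ P.Xfree}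
  cost_added : ∀ i, ∀ x ∈ added i, cost x = cost (sel i x) + dist x (sel i x)
  parent_added : ∀ i, ∀ x ∈ added i, parent x = sel i x
  step_open : ∀ i, Vopen (i + 1) = (Vopen i \ group i) ∪ added i
  step_unexp : ∀ i, Vunexp (i + 1) = Vunexp i \ added i
  step_closed : ∀ i, Vclosed (i + 1) = Vclosed i ∪ group i

namespace GMTRun

variable {d : ℕ} {P : GMTProblem d}

/-- GMT* terminates successfully: some expansion group contains a goal node. -/
def success (R : GMTRun P) : Prop := ∃ i, (R.group i ∩ P.Xgoal).Nonempty

open Classical in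
/-- The terminal iteration `i_end`: the first iteration whose group contains a goal node. -/
def iend (R : GMTRun P) (h : R.success) : ℕ := Nat.find h

open Classical in
/-- The cost `c_GMT` of the path returned by GMT*: on success, the cost-to-arrive of the
minimum-cost goal node in the group at iteration `i_end` (junk value `0` on failure). -/
def cGMT (R : GMTRun P) : ℝ :=
  if h : R.success then sInf (R.cost '' (R.group (R.iend h) ∩ P.Xgoal)) else 0

end GMTRun

/-- The waypoints `y_0, …, y_M` `(ε, r)`-trace the path `σ : [0,1] → X` of arc
length `cσ`: (i) consecutive waypoints are within distance `r`; (ii) the polygonal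
path through the waypoints has length at most `(1 + ε) cσ`; (iii) every point of
the polygonal path lies within distance `r` of the image of `σ`. -/
def Traces {d : ℕ} (ε r : ℝ) (M : ℕ) (y : ℕ → EucSp d)
    (σ : ℝ → EucSp d) (cσ : ℝ) : Prop :=
  (∀ m, 1 ≤ m → m ≤ M → dist (y m) (y (m - 1)) ≤ r) ∧
  (∑ k ∈ Finset.Icc 1 M, dist (y k) (y (k - 1))) ≤ (1 + ε) * cσ ∧
  (∀ m, 1 ≤ m → m ≤ M → ∀ p ∈ segment ℝ (y (m - 1)) (y m),
    ∃ t ∈ Set.Icc (0 : ℝ) 1, dist p (σ t) ≤ r)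

section AuxGMT

variable {d : ℕ} {P : GMTProblem d} (R : GMTRun P)

namespace GMTRun

lemma mem_group_iff {i : ℕ} {x : EucSp d} :
    x ∈ R.group i ↔ x ∈ R.Vopen i ∧ R.cost x ≤ (i : ℝ) * P.delta := by
  rw [R.group_def]; simp [Set.mem_setOf_eq]

lemma group_subset (i : ℕ) : R.group i ⊆ R.Vopen i :=
  fun _ hx => ((R.mem_group_iff).1 hx).1

lemma mem_cand_iff {i : ℕ} {x : EucSp d} :
    x ∈ R.cand i ↔ x ∈ R.Vunexp i ∧ ∃ z ∈ R.group i, dist x z ≤ P.r := by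
  rw [R.cand_def]; simp [Set.mem_setOf_eq]

lemma mem_added_iff {i : ℕ} {x : EucSp d} :
    x ∈ R.added i ↔ x ∈ R.cand i ∧ segment ℝ (R.sel i x) x ⊆ P.Xfree := by
  rw [R.added_def]; simp [Set.mem_setOf_eq]

lemma added_subset_unexp (i : ℕ) : R.added i ⊆ R.Vunexp i :=
  fun _ hx => ((R.mem_cand_iff).1 ((R.mem_added_iff).1 hx).1).1

lemma unexp_antitone {a b : ℕ} (h : a ≤ b) : R.Vunexp b ⊆ R.Vunexp a := by
  induction b with
  | zero => simp_all
  | succ n ih =>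
    rcases Nat.eq_or_lt_of_le h with rfl | h'
    · exact subset_rfl
    · have h1 : R.Vunexp (n+1) ⊆ R.Vunexp n := by rw [R.step_unexp]; exact Set.diff_subset
      exact h1.trans (ih (Nat.lt_succ_iff.1 h'))

lemma open_subset_V (hV : P.xinit ∈ P.V) (i : ℕ) :
    R.Vopen i ⊆ P.V ∧ R.Vunexp i ⊆ P.V := by
  induction i with
  | zero =>
    constructor
    · rw [R.init_open]; simpa using hV
    · rw [R.init_unexp]; exact Set.diff_subset
  | succ n ih =>
    constructor
    · rw [R.step_open]
      exact Set.union_subset (Set.diff_subset.trans ih.1)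
        ((R.added_subset_unexp n).trans ih.2)
    · rw [R.step_unexp]; exact Set.diff_subset.trans ih.2

lemma V_subset_union (i : ℕ) :
    P.V ⊆ R.Vopen i ∪ R.Vclosed i ∪ R.Vunexp i := by
  induction i with
  | zero =>
    intro x hx
    rw [R.init_open, R.init_unexp]
    by_cases h : x = P.xinit
    · exact Or.inl (Or.inl (by simp [h]))
    · exact Or.inr ⟨hx, by simp [h]⟩
  | succ n ih =>
    intro x hx
    rw [R.step_open, R.step_unexp, R.step_closed]
    rcases ih hx with (ho | hc) | hu
    · by_cases hg : x ∈ R.group n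
      · exact Or.inl (Or.inr (Or.inr hg))
      · exact Or.inl (Or.inl (Or.inl ⟨ho, hg⟩))
    · exact Or.inl (Or.inr (Or.inl hc))
    · by_cases ha : x ∈ R.added n
      · exact Or.inl (Or.inl (Or.inr ha))
      · exact Or.inr ⟨hu, ha⟩

lemma unexp_disjoint (i : ℕ) :
    ∀ x ∈ R.Vunexp i, x ∉ R.Vopen i ∧ x ∉ R.Vclosed i := by
  induction i with
  | zero =>
    intro x hx
    rw [R.init_unexp] at hx
    rw [R.init_open, R.init_closed]
    constructor
    · simpa using hx.2
    · simp
  | succ n ih =>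
    intro x hx
    rw [R.step_unexp] at hx
    obtain ⟨hu, hna⟩ := hx
    obtain ⟨hno, hnc⟩ := ih x hu
    rw [R.step_open, R.step_closed]
    constructor
    · rintro (⟨h1, _⟩ | h2)
      · exact hno h1
      · exact hna h2
    · rintro (h1 | h2)
      · exact hnc h1
      · exact hno (R.group_subset n h2)

lemma stay_open {x : EucSp d} {e : ℕ} (hx : x ∈ R.Vopen e) :
    ∀ j, e ≤ j → (∀ τ, e ≤ τ → τ < j → x ∉ R.group τ) → x ∈ R.Vopen j := by
  intro j
  induction j with
  | zero => intro h _; exact Nat.le_zero.1 h ▸ hx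
  | succ n ih =>
    intro h hng
    rcases Nat.eq_or_lt_of_le h with rfl | h'
    · exact hx
    · have hn : e ≤ n := Nat.lt_succ_iff.1 h'
      have hxn : x ∈ R.Vopen n := ih hn (fun τ h1 h2 => hng τ h1 (h2.trans (Nat.lt_succ_self n)))
      rw [R.step_open]
      exact Or.inl ⟨hxn, hng n hn (Nat.lt_succ_self n)⟩

lemma closed_grouped {x : EucSp d} {i : ℕ} (hx : x ∈ R.Vclosed i) :
    ∃ γ, γ < i ∧ x ∈ R.group γ := by
  induction i with
  | zero => rw [R.init_closed] at hx; exact absurd hx (Set.notMem_empty x)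
  | succ n ih =>
    rw [R.step_closed] at hx
    rcases hx with h | h
    · obtain ⟨γ, h1, h2⟩ := ih h
      exact ⟨γ, h1.trans (Nat.lt_succ_self n), h2⟩
    · exact ⟨n, Nat.lt_succ_self n, h⟩

lemma tree_entry {x : EucSp d} {i : ℕ} (hx : x ∈ R.Vopen i ∪ R.Vclosed i) :
    x = P.xinit ∨ ∃ a, a < i ∧ x ∈ R.added a := by
  induction i with
  | zero =>
    rcases hx with h | h
    · rw [R.init_open] at h; exact Or.inl h
    · rw [R.init_closed] at h; exact absurd h (Set.notMem_empty x)
  | succ n ih =>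
    have step : (x ∈ R.Vopen n ∪ R.Vclosed n) → x = P.xinit ∨ ∃ a, a < n + 1 ∧ x ∈ R.added a := by
      intro h
      rcases ih h with h1 | ⟨a, h2, h3⟩
      · exact Or.inl h1
      · exact Or.inr ⟨a, h2.trans (Nat.lt_succ_self n), h3⟩
    rcases hx with h | h
    · rw [R.step_open] at h
      rcases h with ⟨h1, _⟩ | h2
      · exact step (Or.inl h1)
      · exact Or.inr ⟨n, Nat.lt_succ_self n, h2⟩
    · rw [R.step_closed] at h
      rcases h with h1 | h2
      · exact step (Or.inr h1)
      · exact step (Or.inl (R.group_subset n h2))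

lemma added_cost_via {x w : EucSp d} {i : ℕ} (hx : x ∈ R.added i)
    (hw : w ∈ R.Vopen i) (hdist : dist x w ≤ P.r) :
    R.cost x ≤ R.cost w + dist x w := by
  have hc : x ∈ R.cand i := ((R.mem_added_iff).1 hx).1
  rw [R.cost_added i x hx]
  exact R.sel_min i x hc w hw hdist

lemma added_cost_thresh {x : EucSp d} {i : ℕ} (hx : x ∈ R.added i) :
    R.cost x ≤ (i : ℝ) * P.delta + P.r := by
  have hc : x ∈ R.cand i := ((R.mem_added_iff).1 hx).1
  obtain ⟨_, z, hz, hdz⟩ := (R.mem_cand_iff).1 hc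
  have h1 : R.cost x ≤ R.cost z + dist x z :=
    R.added_cost_via hx (R.group_subset i hz) hdz
  have h2 : R.cost z ≤ (i : ℝ) * P.delta := ((R.mem_group_iff).1 hz).2
  have h3 : dist x z ≤ P.r := hdz
  linarith

lemma first_group {x : EucSp d} {e : ℕ} (hδ : 0 < P.delta) (hx : x ∈ R.Vopen e) :
    ∃ g, e ≤ g ∧ x ∈ R.group g ∧ (∀ τ, e ≤ τ → τ < g → x ∉ R.group τ) ∧
      (g : ℝ) * P.delta ≤ max ((e : ℝ) * P.delta) (R.cost x + P.delta) := by
  classical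
  set N : ℕ := max e ⌈R.cost x / P.delta⌉₊ with hN
  have hNe : e ≤ N := le_max_left _ _
  have hNc : R.cost x ≤ (N : ℝ) * P.delta := by
    rcases le_or_gt (R.cost x) 0 with h | h
    · have : (0:ℝ) ≤ (N : ℝ) * P.delta := by positivity
      linarith
    · have h1 : (⌈R.cost x / P.delta⌉₊ : ℝ) ≥ R.cost x / P.delta := Nat.le_ceil _
      have h2 : (⌈R.cost x / P.delta⌉₊ : ℝ) ≤ (N : ℝ) := by
        exact_mod_cast Nat.cast_le.2 (le_max_right e _)
      have h3 : R.cost x / P.delta * P.delta = R.cost x := div_mul_cancel₀ _ (ne_of_gt hδ)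
      nlinarith
  have hex : ∃ τ, (e ≤ τ ∧ τ ≤ N ∧ x ∈ R.group τ) := by
    by_contra hcon
    push_neg at hcon
    have hxN : x ∈ R.Vopen N := by
      refine R.stay_open hx N hNe ?_
      intro τ h1 h2 hg
      exact (hcon τ h1 (le_of_lt h2)) hg
    exact (hcon N hNe le_rfl) ((R.mem_group_iff).2 ⟨hxN, hNc⟩)
  obtain ⟨τ₀, hτ₀⟩ := hex
  have hex2 : ∃ τ, e ≤ τ ∧ x ∈ R.group τ := ⟨τ₀, hτ₀.1, hτ₀.2.2⟩
  set g := Nat.find hex2 with hg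
  have hspec := Nat.find_spec hex2
  refine ⟨g, hspec.1, hspec.2, ?_, ?_⟩
  · intro τ h1 h2 hgr
    exact Nat.find_min hex2 h2 ⟨h1, hgr⟩
  · have hgN : g ≤ N := Nat.find_le ⟨hτ₀.1, hτ₀.2.2⟩ |>.trans hτ₀.2.1
    have hcast : (g : ℝ) ≤ (N : ℝ) := Nat.cast_le.2 hgN
    have hd0 : (0:ℝ) ≤ P.delta := le_of_lt hδ
    have hNr : (N : ℝ) = max (e : ℝ) (⌈R.cost x / P.delta⌉₊ : ℝ) := by
      rw [hN]; push_cast [Nat.cast_max]; ring_nf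
    have hceil : (⌈R.cost x / P.delta⌉₊ : ℝ) * P.delta ≤
        max ((e : ℝ) * P.delta) (R.cost x + P.delta) := by
      rcases le_or_gt 0 (R.cost x) with h | h
      · have h0 : (0:ℝ) ≤ R.cost x / P.delta := by positivity
        have h1 : (⌈R.cost x / P.delta⌉₊ : ℝ) < R.cost x / P.delta + 1 := Nat.ceil_lt_add_one h0
        have h3 : R.cost x / P.delta * P.delta = R.cost x := div_mul_cancel₀ _ (ne_of_gt hδ)
        have h4 := le_max_right ((e : ℝ) * P.delta) (R.cost x + P.delta)
        nlinarith
      · have h1 : ⌈R.cost x / P.delta⌉₊ = 0 :=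
          Nat.ceil_eq_zero.2 (le_of_lt (div_neg_of_neg_of_pos h hδ))
        rw [h1]
        have h4 := le_max_left ((e : ℝ) * P.delta) (R.cost x + P.delta)
        have h5 : (0:ℝ) ≤ (e : ℝ) * P.delta := by positivity
        simpa using le_trans h5 h4
    have hmul : (g : ℝ) * P.delta ≤ (N : ℝ) * P.delta :=
      mul_le_mul_of_nonneg_right hcast hd0
    rw [hNr, max_mul_of_nonneg _ _ hd0] at hmul
    refine hmul.trans (max_le (le_max_left _ _) hceil)

end GMTRun

end AuxGMT

section MainGMT

open Metric Set

lemma dist_seg {d : ℕ} {u v p : EucSp d} (hp : p ∈ segment ℝ u v) : dist p v ≤ dist u v := by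
  obtain ⟨a, b, ha, hb, hab, rfl⟩ := hp
  have hb' : b • v - v = -(a • v) := by
    have hba : b - 1 = -a := by linarith
    nth_rewrite 2 [← one_smul ℝ v]
    rw [← sub_smul, hba, neg_smul]
  have he : a • u + b • v - v = a • (u - v) := by
    rw [smul_sub]
    calc a • u + b • v - v = a • u + (b • v - v) := by abel
    _ = a • u + -(a • v) := by rw [hb']
    _ = a • u - a • v := by abel
  rw [dist_eq_norm, he, norm_smul, dist_eq_norm]
  have ha1 : a ≤ 1 := by linarith
  have hna : ‖a‖ = a := Real.norm_of_nonneg ha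
  nlinarith [norm_nonneg (u - v)]

set_option maxHeartbeats 2000000 in
lemma gmt_main {d : ℕ} {P : GMTProblem d} (R : GMTRun P)
    (hr : 0 < P.r) (hlam0 : 0 < P.lam) (hlam1 : P.lam ≤ 1)
    (hV : P.xinit ∈ P.V)
    (M : ℕ) (y : ℕ → EucSp d)
    (hy0 : y 0 = P.xinit)
    (hyV : ∀ m ≤ M, y m ∈ P.V)
    (hball : ∀ m ≤ M, Metric.closedBall (y m) P.r ⊆ P.Xfree)
    (L : ℕ → ℝ) (hL0 : L 0 = 0)
    (hLsucc : ∀ j, L (j + 1) = L j + dist (y (j + 1)) (y j))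
    (hhop : ∀ j, j + 1 ≤ M → dist (y (j + 1)) (y j) ≤ P.r) :
    (∃ jf, y M ∈ R.group jf) ∧ R.cost (y M) ≤ (1 + 2 * P.lam) * L M ∧
      (∀ a, y M ∈ R.Vunexp a → (a : ℝ) * P.delta ≤ (1 + 2 * P.lam) * L M) := by
  classical
  set δ := P.delta with hδdef
  set Λ := 1 + 2 * P.lam with hΛdef
  have hδ : 0 < δ := mul_pos hlam0 hr
  have hδr : δ ≤ P.r := by
    rw [hδdef, GMTProblem.delta]; nlinarith
  have hΛ1 : (1:ℝ) ≤ Λ := by rw [hΛdef]; linarith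
  have hΛ0 : (0:ℝ) ≤ Λ := by linarith
  have hΛr : Λ * P.r = P.r + 2 * δ := by
    rw [hΛdef, hδdef, GMTProblem.delta]; ring
  have hLmono : Monotone L := by
    apply monotone_nat_of_le_succ
    intro n
    rw [hLsucc n]
    linarith [dist_nonneg (x := y (n+1)) (y := y n)]
  have hLnn : ∀ m, 0 ≤ L m := fun m => hL0 ▸ hLmono (Nat.zero_le m)
  have hLchain' : ∀ n m, dist (y (m + n)) (y m) ≤ L (m + n) - L m := by
    intro n
    induction n with
    | zero => intro m; simp
    | succ t ih =>
      intro m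
      have h1 := dist_triangle (y (m + t + 1)) (y (m + t)) (y m)
      have h2 := hLsucc (m + t)
      have h3 := ih m
      have he : m + (t+1) = (m + t) + 1 := by omega
      rw [he]
      rw [he] at *
      linarith
  have hchain : ∀ {m k : ℕ}, m ≤ k → dist (y k) (y m) ≤ L k - L m := by
    intro m k h
    obtain ⟨n, rfl⟩ := Nat.exists_eq_add_of_le h
    exact hLchain' n m
  have hΛmono : ∀ a b : ℕ, a ≤ b → Λ * L a ≤ Λ * L b := fun a b h =>
    mul_le_mul_of_nonneg_left (hLmono h) hΛ0
  rcases Nat.eq_zero_or_pos M with rfl | hM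
  · refine ⟨⟨0, ?_⟩, ?_, ?_⟩
    · refine (R.mem_group_iff).2 ⟨?_, ?_⟩
      · rw [R.init_open, Set.mem_singleton_iff]; exact hy0
      · rw [hy0, R.cost_init]; norm_num
    · rw [hy0, R.cost_init, hL0]; norm_num
    · intro a ha
      exfalso
      have h1 := R.unexp_antitone (Nat.zero_le a) ha
      rw [R.init_unexp] at h1
      exact h1.2 (by rw [hy0]; rfl)
  · have MAIN : ∀ n : ℕ, ∀ m g : ℕ, m < M → M - m ≤ n →
        (y m ∈ R.group g ∧ R.cost (y m) ≤ Λ * L m ∧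
          (g:ℝ) * δ ≤ Λ * L m + 2*δ ∧ (g:ℝ) * δ ≤ Λ * L (m+1) + δ ∧
          (g:ℝ) * δ ≤ Λ * L M ∧
          (∀ a, a ≤ g → ∃ m', m' ≤ m ∧ y m' ∈ R.Vopen a ∧ R.cost (y m') ≤ Λ * L m' ∧
            (a:ℝ) * δ ≤ Λ * L m' + 2*δ ∧ (m' < M → (a:ℝ) * δ ≤ Λ * L (m'+1) + δ))) →
        ((∃ jf, y M ∈ R.group jf) ∧ R.cost (y M) ≤ Λ * L M ∧
          (∀ a, y M ∈ R.Vunexp a → (a : ℝ) * δ ≤ Λ * L M)) := by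
      intro n
      induction n with
      | zero => intro m g hmM hn _; omega
      | succ n ih =>
        intro m g hmM hn hSI
        obtain ⟨hgrp, hW4, hW5, hW6, hW10, hCOV⟩ := hSI
        set k := Nat.findGreatest (fun j => L j ≤ L m + P.r) M with hk
        have hm1M : m + 1 ≤ M := hmM
        have hPm1 : L (m+1) ≤ L m + P.r := by
          rw [hLsucc m]; linarith [hhop m hm1M]
        have hkm : m + 1 ≤ k := Nat.le_findGreatest hm1M hPm1
        have hmk : m ≤ k := by omega
        have hkM : k ≤ M := Nat.findGreatest_le M
        have hLk : L k ≤ L m + P.r := by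
          have h := Nat.findGreatest_spec (P := fun j => L j ≤ L m + P.r) hm1M hPm1
          rw [hk]; exact h
        have hmax : k < M → L m + P.r < L (k+1) := by
          intro h
          have h1 : ¬ (L (k+1) ≤ L m + P.r) :=
            Nat.findGreatest_is_greatest (P := fun j => L j ≤ L m + P.r) (n := M)
              (by rw [← hk]; omega) (by omega)
          exact not_le.1 h1
        have hLmk : L m ≤ L k := hLmono hmk
        have hchainkm : dist (y k) (y m) ≤ L k - L m := hchain hmk
        have hdistkm : dist (y k) (y m) ≤ P.r := by linarith
        -- construct the next witness group time
        have key : ∃ g', y k ∈ R.group g' ∧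
            (∀ a, a ≤ g' → a ≤ g ∨ y k ∈ R.Vopen a) ∧
            (g':ℝ) * δ ≤ max ((g:ℝ)*δ + δ) (R.cost (y k) + δ) ∧
            R.cost (y k) ≤ Λ * L k ∧ R.cost (y k) ≤ Λ * L m + P.r + δ ∧
            y k ∉ R.Vunexp (g+1) := by
          by_cases hunexp : y k ∈ R.Vunexp g
          · -- case A : y k is unexplored, it gets added now
            have hcand : y k ∈ R.cand g := (R.mem_cand_iff).2 ⟨hunexp, y m, hgrp, hdistkm⟩
            have hsel := R.sel_mem g (y k) hcand
            have hfree : segment ℝ (R.sel g (y k)) (y k) ⊆ P.Xfree := by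
              intro p hp
              apply hball k hkM
              rw [Metric.mem_closedBall]
              exact le_trans (dist_seg hp) (by rw [dist_comm]; exact hsel.2)
            have hadded : y k ∈ R.added g := (R.mem_added_iff).2 ⟨hcand, hfree⟩
            have hopen1 : y k ∈ R.Vopen (g+1) := by
              rw [R.step_open]; exact Or.inr hadded
            have hcostA : R.cost (y k) ≤ R.cost (y m) + dist (y k) (y m) :=
              R.added_cost_via hadded (R.group_subset g hgrp) hdistkm
            have hW4k : R.cost (y k) ≤ Λ * L k := by
              nlinarith [mul_nonneg (by linarith : (0:ℝ) ≤ Λ - 1)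
                (by linarith : (0:ℝ) ≤ L k - L m)]
            have hC6 : R.cost (y k) ≤ Λ * L m + P.r + δ := by linarith
            obtain ⟨g', hge', hgrpk, hmin', hbnd'⟩ := R.first_group hδ hopen1
            refine ⟨g', hgrpk, ?_, ?_, hW4k, hC6, ?_⟩
            · intro a ha
              rcases le_or_gt a g with h | h
              · exact Or.inl h
              · refine Or.inr (R.stay_open hopen1 a (by omega) ?_)
                intro τ h1 h2
                exact hmin' τ h1 (lt_of_lt_of_le h2 ha)
            · refine hbnd'.trans (max_le_max (le_of_eq ?_) le_rfl)
              push_cast; ring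
            · rw [R.step_unexp]
              intro hmem
              exact hmem.2 hadded
          · -- case B : y k is already in the tree
            have htree : y k ∈ R.Vopen g ∪ R.Vclosed g := by
              rcases R.V_subset_union g (hyV k hkM) with h | h
              · exact h
              · exact absurd h hunexp
            have hnotunexp : y k ∉ R.Vunexp (g+1) := fun h =>
              hunexp (R.unexp_antitone (Nat.le_succ g) h)
            have hW4C6 : R.cost (y k) ≤ Λ * L k ∧ R.cost (y k) ≤ Λ * L m + P.r + δ := by
              rcases R.tree_entry htree with hxi | ⟨a, hag, haddedk⟩
              · rw [hxi, R.cost_init]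
                constructor
                · exact mul_nonneg hΛ0 (hLnn k)
                · have := hΛmono 0 m (Nat.zero_le m)
                  rw [hL0] at this
                  nlinarith [hLnn m]
              · obtain ⟨m', hm'm, hopenm', hcostm', hbd1, hbd2⟩ := hCOV a (le_of_lt hag)
                have hm'k : m' ≤ k := le_trans hm'm hmk
                have hLm'k : L m' ≤ L k := hLmono hm'k
                have hLm'm : L m' ≤ L m := hLmono hm'm
                by_cases hnear : L k - L m' ≤ P.r
                · have hdist' : dist (y k) (y m') ≤ P.r := le_trans (hchain hm'k) hnear
                  have hcv := R.added_cost_via haddedk hopenm' hdist'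
                  have hch := hchain hm'k
                  constructor
                  · nlinarith [mul_nonneg (by linarith : (0:ℝ) ≤ Λ - 1)
                      (by linarith : (0:ℝ) ≤ L k - L m')]
                  · have h2 : Λ * L m' ≤ Λ * L m := hΛmono _ _ hm'm
                    linarith
                · push_neg at hnear
                  have hth := R.added_cost_thresh haddedk
                  constructor
                  · have h6 : Λ * L m' ≤ Λ * (L k - P.r) :=
                      mul_le_mul_of_nonneg_left (by linarith) hΛ0
                    have h7 : Λ * (L k - P.r) = Λ * L k - (P.r + 2*δ) := by
                      linear_combination -hΛr
                    linarith
                  · have hm'ltm : m' < m := by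
                      rcases lt_or_eq_of_le hm'm with h | h
                      · exact h
                      · exfalso; rw [h] at hnear; linarith
                    have hm'M : m' < M := lt_trans hm'ltm hmM
                    have h8 := hbd2 hm'M
                    have h9 : Λ * L (m'+1) ≤ Λ * L m := hΛmono _ _ (by omega)
                    linarith
            rcases htree with hopeng | hclosedg
            · obtain ⟨g', hge', hgrpk, hmin', hbnd'⟩ := R.first_group hδ hopeng
              refine ⟨g', hgrpk, ?_, ?_, hW4C6.1, hW4C6.2, hnotunexp⟩
              · intro a ha
                rcases le_or_gt a g with h | h
                · exact Or.inl h
                · refine Or.inr (R.stay_open hopeng a (by omega) ?_)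
                  intro τ h1 h2
                  exact hmin' τ h1 (lt_of_lt_of_le h2 ha)
              · refine hbnd'.trans (max_le_max (by linarith) le_rfl)
            · obtain ⟨γ, hγ, hgrpγ⟩ := R.closed_grouped hclosedg
              refine ⟨γ, hgrpγ, fun a ha => Or.inl (by omega), ?_, hW4C6.1, hW4C6.2, hnotunexp⟩
              have h1 : (γ:ℝ) * δ ≤ (g:ℝ) * δ :=
                mul_le_mul_of_nonneg_right (by exact_mod_cast le_of_lt hγ) hδ.le
              exact le_trans (by linarith) (le_max_left _ _)
        obtain ⟨g', hgrpk, hcovopen, hEb, hW4k, hC6, hnotunexp⟩ := key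
        have hg'cast : ∀ a : ℕ, a ≤ g' → (a:ℝ) * δ ≤ (g':ℝ) * δ := fun a ha =>
          mul_le_mul_of_nonneg_right (by exact_mod_cast ha) hδ.le
        have hΛk1 : Λ * L (m+1) ≤ Λ * L k := hΛmono _ _ hkm
        have hW5k : (g':ℝ) * δ ≤ Λ * L k + 2*δ :=
          hEb.trans (max_le (by linarith) (by linarith))
        have hkfact : k < M → Λ * L m + P.r + 2*δ ≤ Λ * L (k+1) := by
          intro h
          have h2 : Λ * (L m + P.r) ≤ Λ * L (k+1) :=
            mul_le_mul_of_nonneg_left (le_of_lt (hmax h)) hΛ0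
          have h3 : Λ * (L m + P.r) = Λ * L m + (P.r + 2*δ) := by
            linear_combination hΛr
          linarith
        have hW6k : k < M → (g':ℝ) * δ ≤ Λ * L (k+1) + δ := by
          intro h
          have h1 := hkfact h
          have h4 : Λ * L k ≤ Λ * L (k+1) := hΛmono _ _ (Nat.le_succ k)
          exact hEb.trans (max_le (by linarith) (by linarith))
        have hW10k : k < M → (g':ℝ) * δ ≤ Λ * L M := by
          intro h
          have h1 := hkfact h
          have h5 : Λ * L (k+1) ≤ Λ * L M := hΛmono _ _ h
          exact hEb.trans (max_le (by linarith) (by linarith))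
        have hCOVk : ∀ a, a ≤ g' → ∃ m', m' ≤ k ∧ y m' ∈ R.Vopen a ∧
            R.cost (y m') ≤ Λ * L m' ∧ (a:ℝ) * δ ≤ Λ * L m' + 2*δ ∧
            (m' < M → (a:ℝ) * δ ≤ Λ * L (m'+1) + δ) := by
          intro a ha
          rcases hcovopen a ha with h | h
          · obtain ⟨m', h1, h2, h3, h4, h5⟩ := hCOV a h
            exact ⟨m', h1.trans hmk, h2, h3, h4, h5⟩
          · exact ⟨k, le_rfl, h, hW4k, (hg'cast a ha).trans hW5k,
              fun hM' => (hg'cast a ha).trans (hW6k hM')⟩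
        by_cases hkMeq : k = M
        · refine ⟨⟨g', hkMeq ▸ hgrpk⟩, hkMeq ▸ hW4k, ?_⟩
          intro a ha
          have hag : a ≤ g := by
            by_contra hcon
            push_neg at hcon
            have ha' : y k ∈ R.Vunexp a := by rw [hkMeq]; exact ha
            exact hnotunexp (R.unexp_antitone (show g + 1 ≤ a by omega) ha')
          have h1 : (a:ℝ) * δ ≤ (g:ℝ) * δ :=
            mul_le_mul_of_nonneg_right (by exact_mod_cast hag) hδ.le
          linarith
        · have hkM' : k < M := lt_of_le_of_ne hkM hkMeq
          exact ih k g' hkM' (by omega) ⟨hgrpk, hW4k, hW5k, hW6k hkM', hW10k hkM', hCOVk⟩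
    -- initial state
    have hgrp0 : y 0 ∈ R.group 0 := by
      refine (R.mem_group_iff).2 ⟨?_, ?_⟩
      · rw [R.init_open, Set.mem_singleton_iff]; exact hy0
      · rw [hy0, R.cost_init]; norm_num
    have hopen0 : y 0 ∈ R.Vopen 0 := R.group_subset 0 hgrp0
    have hcost0 : R.cost (y 0) = 0 := by rw [hy0, R.cost_init]
    refine MAIN M 0 0 hM (by omega) ⟨hgrp0, ?_, ?_, ?_, ?_, ?_⟩
    · rw [hcost0, hL0]; norm_num
    · rw [hL0]; push_cast; nlinarith
    · push_cast; nlinarith [hLnn 1]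
    · push_cast; nlinarith [hLnn M]
    · intro a ha
      have ha0 : a = 0 := Nat.le_zero.1 ha
      subst ha0
      refine ⟨0, le_rfl, hopen0, by rw [hcost0, hL0]; norm_num, ?_, ?_⟩
      · rw [hL0]; push_cast; nlinarith
      · intro _; push_cast; nlinarith [hLnn 1]

end MainGMT

set_option maxHeartbeats 1000000 in
/-- **Deterministic core of the Approximate Asymptotic Optimality theorem.**
Suppose `r > 0`, `ε > 0`, `σ : [0,1] → X_free` is a feasible path with
`σ(0) = x_init`, `σ(1) ∈ X_goal` and arc length `cσ`, and the sample set `V`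
contains waypoints `y_0, …, y_M` with `y_0 = x_init`, `y_M ∈ X_goal`, which
`(ε, r)`-trace `σ` and whose surrounding closed balls `B(y_m, r)` lie in
`X_free`.  Then GMT* run with connection radius `r` and group cost threshold
factor `λ` terminates successfully and returns a path of cost
`c_GMT ≤ (1 + 2λ)(1 + ε) cσ`. -/
theorem gmt_traced_path_bound {d : ℕ} (hd : 2 ≤ d)
    (P : GMTProblem d) (hP : P.Valid) (R : GMTRun P)
    (ε : ℝ) (hε : 0 < ε)
    (σ : ℝ → EucSp d) (hσcont : ContinuousOn σ (Set.Icc 0 1))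
    (hσfree : ∀ t ∈ Set.Icc (0 : ℝ) 1, σ t ∈ P.Xfree)
    (hσ0 : σ 0 = P.xinit) (hσ1 : σ 1 ∈ P.Xgoal)
    (cσ : ℝ) (hcσ0 : 0 ≤ cσ)
    (hlen : eVariationOn σ (Set.Icc 0 1) = ENNReal.ofReal cσ)
    (M : ℕ) (y : ℕ → EucSp d)
    (hy0 : y 0 = P.xinit) (hyM : y M ∈ P.Xgoal)
    (hyV : ∀ m ≤ M, y m ∈ P.V)
    (htrace : Traces ε P.r M y σ cσ)
    (hball : ∀ m ≤ M, Metric.closedBall (y m) P.r ⊆ P.Xfree) :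
    R.success ∧ R.cGMT ≤ (1 + 2 * P.lam) * (1 + ε) * cσ := by
  classical
  obtain ⟨hr, hlam, hVfin, hinitfree, hVfree, hinitV, hgoalfree, hgoalne⟩ := hP
  obtain ⟨htr1, htr2, htr3⟩ := htrace
  set L : ℕ → ℝ := fun m => ∑ k ∈ Finset.Icc 1 m, dist (y k) (y (k-1)) with hLdef
  have hL0 : L 0 = 0 := by simp [hLdef]
  have hLsucc : ∀ j, L (j+1) = L j + dist (y (j+1)) (y j) := by
    intro j
    rw [hLdef]
    simp only []
    rw [Finset.sum_Icc_succ_top (by omega : 1 ≤ j+1)]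
    simp
  have hhop : ∀ j, j + 1 ≤ M → dist (y (j+1)) (y j) ≤ P.r := by
    intro j hj
    have h := htr1 (j+1) (by omega) hj
    simpa using h
  obtain ⟨⟨jf, hjf⟩, hcostM, hEPc⟩ :=
    gmt_main R hr hlam.1 hlam.2 hinitV M y hy0 hyV hball L hL0 hLsucc hhop
  have hsucc : R.success := ⟨jf, y M, hjf, hyM⟩
  refine ⟨hsucc, ?_⟩
  have hδ : 0 < P.delta := mul_pos hlam.1 hr
  have hΛ0 : (0:ℝ) ≤ 1 + 2 * P.lam := by linarith [hlam.1]
  have hLM : L M ≤ (1+ε) * cσ := htr2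
  have hfinal : (1 + 2 * P.lam) * L M ≤ (1 + 2 * P.lam) * (1 + ε) * cσ := by
    rw [mul_assoc]
    exact mul_le_mul_of_nonneg_left hLM hΛ0
  suffices h : R.cGMT ≤ (1 + 2 * P.lam) * L M by linarith
  have hc : R.cGMT = sInf (R.cost '' (R.group (R.iend hsucc) ∩ P.Xgoal)) := by
    rw [GMTRun.cGMT, dif_pos hsucc]
  rw [hc]
  set ie := R.iend hsucc with hie
  have hiespec : (R.group ie ∩ P.Xgoal).Nonempty := by
    rw [hie, GMTRun.iend]; exact Nat.find_spec hsucc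
  have hfin : (R.cost '' (R.group ie ∩ P.Xgoal)).Finite := by
    apply Set.Finite.image
    apply hVfin.subset
    exact (Set.inter_subset_left).trans
      ((R.group_subset ie).trans (R.open_subset_V hinitV ie).1)
  have hbdd : BddBelow (R.cost '' (R.group ie ∩ P.Xgoal)) := hfin.bddBelow
  have hle_elem : ∀ x ∈ R.group ie ∩ P.Xgoal,
      sInf (R.cost '' (R.group ie ∩ P.Xgoal)) ≤ R.cost x :=
    fun x hx => csInf_le hbdd ⟨x, hx, rfl⟩
  by_cases hyMie : y M ∈ R.group ie
  · exact (hle_elem (y M) ⟨hyMie, hyM⟩).trans hcostM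
  · have hj1ex : ∃ j, y M ∈ R.group j := ⟨jf, hjf⟩
    set j1 := Nat.find hj1ex with hj1
    have hj1spec : y M ∈ R.group j1 := Nat.find_spec hj1ex
    have hiele : ie ≤ j1 := by
      rw [hie, GMTRun.iend]
      exact Nat.find_le ⟨y M, hj1spec, hyM⟩
    have hielt : ie < j1 := lt_of_le_of_ne hiele (fun h => hyMie (h ▸ hj1spec))
    obtain ⟨gn, hgn⟩ := hiespec
    have hgncost : R.cost gn ≤ (ie:ℝ) * P.delta := ((R.mem_group_iff).1 hgn.1).2
    have hle_gn : sInf (R.cost '' (R.group ie ∩ P.Xgoal)) ≤ R.cost gn := hle_elem gn hgn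
    obtain ⟨j1', hj1'⟩ : ∃ n, j1 = n + 1 := ⟨j1 - 1, by omega⟩
    have hieδ : (ie:ℝ) * P.delta ≤ (j1':ℝ) * P.delta :=
      mul_le_mul_of_nonneg_right (by exact_mod_cast (show ie ≤ j1' by omega)) hδ.le
    have hopenj1 : y M ∈ R.Vopen (j1' + 1) := by
      rw [← hj1']; exact R.group_subset j1 hj1spec
    rw [R.step_open] at hopenj1
    rcases hopenj1 with ⟨hop, hng⟩ | hadd
    · have hlt : (j1':ℝ) * P.delta < R.cost (y M) := by
        by_contra hcon
        push_neg at hcon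
        exact hng ((R.mem_group_iff).2 ⟨hop, hcon⟩)
      calc sInf (R.cost '' (R.group ie ∩ P.Xgoal)) ≤ R.cost gn := hle_gn
        _ ≤ (ie:ℝ) * P.delta := hgncost
        _ ≤ (j1':ℝ) * P.delta := hieδ
        _ ≤ R.cost (y M) := le_of_lt hlt
        _ ≤ (1 + 2 * P.lam) * L M := hcostM
    · have hunex : y M ∈ R.Vunexp j1' := R.added_subset_unexp j1' hadd
      have hEc := hEPc j1' hunex
      calc sInf (R.cost '' (R.group ie ∩ P.Xgoal)) ≤ R.cost gn := hle_gn
        _ ≤ (ie:ℝ) * P.delta := hgncost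
        _ ≤ (j1':ℝ) * P.delta := hieδ
        _ ≤ (1 + 2 * P.lam) * L M := hEc
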